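/- For the weight W_{δ,κ}(x) = (1+x)^{1+κ/2}/(1 + δ(1+x)^{κ/2}) with 0 < κ ≤ 2 and δ > 0, the second derivative satisfies 0 ≤ W''_{δ,κ}(x) ≤ C_κ (1+x)^{κ/2 - 1} for all x ≥ 0, where C_κ depends only on κ (uniform in δ); in particular W_{δ,κ} is convex on [0,∞). -/

import Mathlib

/-!
With `p = κ / 2`, `t = 1 + x` and `a = δ t^p`, a direct computation gives
`W'' = p t^(p-1) ((1 + p) + (1 - p) a) / (1 + a)^3`. The bracket is nonnegative because `p ≤ 1`
and at most `(1 + p)(1 + a)`, so `0 ≤ W'' ≤ p (1 + p) t^(p-1)` whatever `δ ≥ 0` is.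
-/

open Set Topology

/-- In the paper's notation, `W_{δ,κ}(x) = weight (κ / 2) δ (1 + x)`. -/
noncomputable def weight (p δ t : ℝ) : ℝ := t ^ (1 + p) / (1 + δ * t ^ p)

noncomputable def weightDeriv (p δ t : ℝ) : ℝ := t ^ p * (1 + p + δ * t ^ p) / (1 + δ * t ^ p) ^ 2

noncomputable def weightDeriv2 (p δ t : ℝ) : ℝ :=
  p * t ^ (p - 1) * (1 + p + (1 - p) * (δ * t ^ p)) / (1 + δ * t ^ p) ^ 3

lemma deriv_deriv_comp_const_add {𝕜 F : Type*} [NontriviallyNormedField 𝕜] [NormedAddCommGroup F]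
    [NormedSpace 𝕜 F] (f : 𝕜 → F) (a x : 𝕜) :
    deriv (deriv fun y => f (a + y)) x = deriv (deriv f) (a + x) := by
  rw [funext (deriv_comp_const_add f a), deriv_comp_const_add]

section
variable {p δ t : ℝ}

lemma hasDerivAt_weight (hδ : 0 ≤ δ) (ht : 0 < t) :
    HasDerivAt (weight p δ) (weightDeriv p δ t) t := by
  have hu := Real.hasDerivAt_rpow_const (p := p) (Or.inl ht.ne')
  have hden : 1 + δ * t ^ p ≠ 0 := by positivity
  refine ((Real.hasDerivAt_rpow_const (Or.inl ht.ne')).div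
    ((hu.const_mul δ).const_add 1) hden).congr_deriv ?_
  rw [weightDeriv, add_sub_cancel_left, Real.rpow_add ht, Real.rpow_one,
    Real.rpow_sub_one ht.ne']
  field_simp
  ring

lemma hasDerivAt_weightDeriv (hδ : 0 ≤ δ) (ht : 0 < t) :
    HasDerivAt (weightDeriv p δ) (weightDeriv2 p δ t) t := by
  have hu := Real.hasDerivAt_rpow_const (p := p) (Or.inl ht.ne')
  have hden : (1 + δ * t ^ p) ^ 2 ≠ 0 := by positivity
  refine ((hu.mul ((hu.const_mul δ).const_add (1 + p))).div
    (((hu.const_mul δ).const_add 1).pow 2) hden).congr_deriv ?_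
  rw [weightDeriv2, Pi.mul_apply, Pi.pow_apply, Real.rpow_sub_one ht.ne']
  field_simp
  ring

lemma deriv_deriv_weight (hδ : 0 ≤ δ) (ht : 0 < t) :
    deriv (deriv (weight p δ)) t = weightDeriv2 p δ t := by
  have hderiv : deriv (weight p δ) =ᶠ[𝓝 t] weightDeriv p δ :=
    (eventually_gt_nhds ht).mono fun _ hs => (hasDerivAt_weight hδ hs).deriv
  rw [hderiv.deriv_eq, (hasDerivAt_weightDeriv hδ ht).deriv]

lemma weightDeriv2_nonneg (hp0 : 0 ≤ p) (hp1 : p ≤ 1) (hδ : 0 ≤ δ) (ht : 0 < t) :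
    0 ≤ weightDeriv2 p δ t := by
  have : 0 ≤ 1 - p := by linarith
  unfold weightDeriv2
  positivity

lemma weightDeriv2_le (hp0 : 0 ≤ p) (hδ : 0 ≤ δ) (ht : 0 < t) :
    weightDeriv2 p δ t ≤ p * (1 + p) * t ^ (p - 1) := by
  set a := δ * t ^ p
  have ha : 0 ≤ a := by positivity
  have hK : 1 + p + (1 - p) * a ≤ (1 + p) * (1 + a) ^ 3 := by
    nlinarith [mul_nonneg (mul_nonneg hp0 ha) (by positivity : (0 : ℝ) ≤ 3 + 3 * a + a ^ 2),
      mul_nonneg hp0 ha]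
  rw [weightDeriv2, div_le_iff₀ (by positivity)]
  calc p * t ^ (p - 1) * (1 + p + (1 - p) * a)
      ≤ p * t ^ (p - 1) * ((1 + p) * (1 + a) ^ 3) := by gcongr
    _ = p * (1 + p) * t ^ (p - 1) * (1 + a) ^ 3 := by ring

lemma convexOn_weight (hp0 : 0 ≤ p) (hp1 : p ≤ 1) (hδ : 0 ≤ δ) :
    ConvexOn ℝ (Ioi 0) (weight p δ) := by
  refine convexOn_of_hasDerivWithinAt2_nonneg (f' := weightDeriv p δ) (f'' := weightDeriv2 p δ)
    (convex_Ioi 0)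
    (fun t ht => (hasDerivAt_weight hδ ht).continuousAt.continuousWithinAt) ?_ ?_ ?_ <;>
    rw [interior_Ioi]
  · exact fun t ht => (hasDerivAt_weight hδ ht).hasDerivWithinAt
  · exact fun t ht => (hasDerivAt_weightDeriv hδ ht).hasDerivWithinAt
  · exact fun t ht => weightDeriv2_nonneg hp0 hp1 hδ ht

end

theorem stmt_19 (κ : ℝ) (hκ : 0 < κ) (hκ2 : κ ≤ 2) :
    ∃ C : ℝ, 0 < C ∧ ∀ δ : ℝ, 0 < δ →
      (∀ x : ℝ, 0 ≤ x →
        0 ≤ deriv (deriv (fun y : ℝ =>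
              (1 + y) ^ (1 + κ / 2) / (1 + δ * (1 + y) ^ (κ / 2)))) x ∧
        deriv (deriv (fun y : ℝ =>
              (1 + y) ^ (1 + κ / 2) / (1 + δ * (1 + y) ^ (κ / 2)))) x
          ≤ C * (1 + x) ^ (κ / 2 - 1)) ∧
      ConvexOn ℝ (Set.Ici (0 : ℝ)) (fun y : ℝ =>
        (1 + y) ^ (1 + κ / 2) / (1 + δ * (1 + y) ^ (κ / 2))) := by
  have hp0 : 0 ≤ κ / 2 := by positivity
  have hp1 : κ / 2 ≤ 1 := by linarith
  refine ⟨κ / 2 * (1 + κ / 2), by positivity, fun δ hδ => ⟨fun x hx => ?_, ?_⟩⟩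
  · have ht : 0 < 1 + x := by linarith
    change 0 ≤ deriv (deriv fun y => weight (κ / 2) δ (1 + y)) x ∧
      deriv (deriv fun y => weight (κ / 2) δ (1 + y)) x ≤ _
    rw [deriv_deriv_comp_const_add, deriv_deriv_weight hδ.le ht]
    exact ⟨weightDeriv2_nonneg hp0 hp1 hδ.le ht, weightDeriv2_le hp0 hδ.le ht⟩
  · refine ((convexOn_weight hp0 hp1 hδ.le).translate_right 1).subset
      (fun x (hx : 0 ≤ x) => ?_) (convex_Ici 0)
    change 0 < 1 + x
    linarith
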